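/- Let F be a field, V an infinite-dimensional F-vector space, V* its dual, V̄ = V ⊕ V*, and q the quadratic form on V̄ given by q(a,α) = α(a). Then every generator of the quadric S_q admits a complement: for every maximal totally q-singular subspace W of V̄ there exists a maximal totally q-singular subspace W' with W ∩ W' = 0 and W + W' = V̄. -/

import Mathlib

/-!
Let `U ≤ V` be the projection of the generator `W` to `V` and `C` a complement of `U`.
The subspace `C ⊕ C⁰` is a generator, since a vector `q`-orthogonal to all of it lies in it
(`C⁰⁰ = C`). By maximality `W` contains `0 ⊕ U⁰`, and `q`-orthogonality inside `W` forces
`W ∩ (C ⊕ C⁰) = 0`. Finally `V* = U⁰ ⊕ C⁰` because `U ∩ C = 0`, so every `(u + c, α)` splits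
as `w + (0, β₁) + (c, β₂)` with `w ∈ W`, `β₁ ∈ U⁰`, `β₂ ∈ C⁰`.
-/

/-- The quadratic form `q(a,α) = α(a)` on `V̄ = V ⊕ V*`. -/
def quadForm {F V : Type*} [Field F] [AddCommGroup V] [Module F V]
    (p : V × Module.Dual F V) : F :=
  p.2 p.1

/-- A totally `q`-singular subspace of `V̄`. -/
def QTotSing {F V : Type*} [Field F] [AddCommGroup V] [Module F V]
    (W : Submodule F (V × Module.Dual F V)) : Prop :=
  ∀ w ∈ W, quadForm w = 0

/-- A generator of the quadric `S_q`: a maximal totally `q`-singular subspace. -/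
def QGen {F V : Type*} [Field F] [AddCommGroup V] [Module F V]
    (W : Submodule F (V × Module.Dual F V)) : Prop :=
  QTotSing W ∧
    ∀ W' : Submodule F (V × Module.Dual F V), QTotSing W' → W ≤ W' → W' = W

section

variable {F V : Type*} [Field F] [AddCommGroup V] [Module F V]

def quadPolar (x y : V × Module.Dual F V) : F :=
  x.2 y.1 + y.2 x.1

lemma quadForm_add (x y : V × Module.Dual F V) :
    quadForm (x + y) = quadForm x + quadForm y + quadPolar x y := by
  simp only [quadForm, quadPolar, Prod.fst_add, Prod.snd_add, map_add, LinearMap.add_apply]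
  ring

lemma quadForm_smul (t : F) (x : V × Module.Dual F V) :
    quadForm (t • x) = t ^ 2 * quadForm x := by
  simp only [quadForm, Prod.smul_fst, Prod.smul_snd, map_smul, LinearMap.smul_apply, smul_eq_mul]
  ring

lemma quadPolar_smul_right (t : F) (x y : V × Module.Dual F V) :
    quadPolar x (t • y) = t * quadPolar x y := by
  simp only [quadPolar, Prod.smul_fst, Prod.smul_snd, map_smul, LinearMap.smul_apply, smul_eq_mul]
  ring

lemma QTotSing.quadPolar_eq_zero {W : Submodule F (V × Module.Dual F V)} (hW : QTotSing W)
    {x y : V × Module.Dual F V} (hx : x ∈ W) (hy : y ∈ W) : quadPolar x y = 0 := by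
  have h := quadForm_add x y
  rwa [hW _ (W.add_mem hx hy), hW x hx, hW y hy, zero_add, zero_add, eq_comm] at h

lemma QGen.mem_of_quadPolar_eq_zero {W : Submodule F (V × Module.Dual F V)} (hW : QGen W)
    {x : V × Module.Dual F V} (hx : quadForm x = 0) (hxW : ∀ w ∈ W, quadPolar w x = 0) :
    x ∈ W := by
  have hsing : QTotSing (W ⊔ F ∙ x) := by
    intro z hz
    obtain ⟨w, hw, _, hy, rfl⟩ := Submodule.mem_sup.mp hz
    obtain ⟨t, rfl⟩ := Submodule.mem_span_singleton.mp hy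
    rw [quadForm_add, quadForm_smul, quadPolar_smul_right, hW.1 w hw, hx, hxW w hw]
    ring
  rw [← hW.2 _ hsing le_sup_left]
  exact Submodule.mem_sup_right (Submodule.mem_span_singleton_self x)

lemma QGen.mk_zero_mem {W : Submodule F (V × Module.Dual F V)} (hW : QGen W)
    {β : Module.Dual F V}
    (hβ : β ∈ (W.map (LinearMap.fst F V (Module.Dual F V))).dualAnnihilator) :
    ((0 : V), β) ∈ W := by
  refine hW.mem_of_quadPolar_eq_zero (map_zero β) fun w hw => ?_
  simpa [quadPolar] using (Submodule.mem_dualAnnihilator β).mp hβ w.1 ⟨w, hw, rfl⟩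

lemma qGen_prod_dualAnnihilator (C : Submodule F V) : QGen (C.prod C.dualAnnihilator) := by
  refine ⟨fun z hz => (Submodule.mem_dualAnnihilator z.2).mp hz.2 z.1 hz.1, ?_⟩
  intro W hW hle
  refine le_antisymm (fun z hz => Submodule.mem_prod.mpr ⟨?_, ?_⟩) hle
  · rw [← Subspace.dualAnnihilator_dualCoannihilator_eq (W := C), Submodule.mem_dualCoannihilator]
    intro β hβ
    simpa [quadPolar] using hW.quadPolar_eq_zero hz
      (hle (show ((0 : V), β) ∈ C.prod C.dualAnnihilator from ⟨C.zero_mem, hβ⟩))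
  · rw [Submodule.mem_dualAnnihilator]
    intro c hc
    simpa [quadPolar] using hW.quadPolar_eq_zero hz
      (hle (show (c, (0 : Module.Dual F V)) ∈ C.prod C.dualAnnihilator from ⟨hc, zero_mem _⟩))

lemma QTotSing.inf_prod_dualAnnihilator_eq_bot {W : Submodule F (V × Module.Dual F V)}
    (hW : QTotSing W) {C : Submodule F V}
    (hC : IsCompl (W.map (LinearMap.fst F V (Module.Dual F V))) C) :
    W ⊓ C.prod C.dualAnnihilator = ⊥ := by
  rw [eq_bot_iff]
  rintro z ⟨hzW, hz₁, hz₂⟩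
  have h₁ : z.1 = 0 := Submodule.disjoint_def.mp hC.disjoint z.1 ⟨z, hzW, rfl⟩ hz₁
  have hU : z.2 ∈ (W.map (LinearMap.fst F V (Module.Dual F V))).dualAnnihilator := by
    rw [Submodule.mem_dualAnnihilator]
    rintro _ ⟨y, hy, rfl⟩
    simpa [quadPolar, h₁] using hW.quadPolar_eq_zero hzW hy
  have h₂ : z.2 = 0 := by
    have h : z.2 ∈ (W.map (LinearMap.fst F V (Module.Dual F V)) ⊔ C).dualAnnihilator := by
      rw [Submodule.dualAnnihilator_sup_eq]
      exact ⟨hU, hz₂⟩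
    simpa [hC.sup_eq_top] using h
  exact (Submodule.mem_bot F).mpr (Prod.ext h₁ h₂)

lemma QGen.sup_prod_dualAnnihilator_eq_top {W : Submodule F (V × Module.Dual F V)}
    (hW : QGen W) {C : Submodule F V}
    (hC : IsCompl (W.map (LinearMap.fst F V (Module.Dual F V))) C) :
    W ⊔ C.prod C.dualAnnihilator = ⊤ := by
  rw [eq_top_iff]
  rintro ⟨v, α⟩ -
  have hv : v ∈ W.map (LinearMap.fst F V (Module.Dual F V)) ⊔ C := hC.sup_eq_top ▸ trivial
  obtain ⟨_, ⟨y, hyW, rfl⟩, c, hc, rfl⟩ := Submodule.mem_sup.mp hv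
  change (y.1 + c, α) ∈ _
  have hdual : (W.map (LinearMap.fst F V (Module.Dual F V))).dualAnnihilator ⊔
      C.dualAnnihilator = ⊤ := by
    rw [← Subspace.dualAnnihilator_inf_eq, hC.inf_eq_bot, Submodule.dualAnnihilator_bot]
  have hα : α - y.2 ∈ (W.map (LinearMap.fst F V (Module.Dual F V))).dualAnnihilator ⊔
      C.dualAnnihilator := hdual ▸ trivial
  obtain ⟨β₁, hβ₁, β₂, hβ₂, hβ⟩ := Submodule.mem_sup.mp hα
  have hsplit : ((y.1 + c, α) : V × Module.Dual F V) = (y + ((0 : V), β₁)) + (c, β₂) := by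
    ext
    · simp
    · simp [add_assoc, hβ]
  rw [hsplit]
  exact Submodule.add_mem_sup (W.add_mem hyW (hW.mk_zero_mem hβ₁)) ⟨hc, hβ₂⟩

end

theorem stmt_15_general {F V : Type*} [Field F] [AddCommGroup V] [Module F V]
    (W : Submodule F (V × Module.Dual F V)) (hW : QGen W) :
    ∃ W' : Submodule F (V × Module.Dual F V),
      QGen W' ∧ W ⊓ W' = ⊥ ∧ W ⊔ W' = ⊤ := by
  obtain ⟨C, hC⟩ := Submodule.exists_isCompl (W.map (LinearMap.fst F V (Module.Dual F V)))
  exact ⟨C.prod C.dualAnnihilator, qGen_prod_dualAnnihilator C,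
    hW.1.inf_prod_dualAnnihilator_eq_bot hC, hW.sup_prod_dualAnnihilator_eq_top hC⟩

/-- Every generator of the quadric `S_q` on `V̄ = V ⊕ V*` admits a complement. -/
theorem stmt_15 {F V : Type*} [Field F] [AddCommGroup V] [Module F V]
    (hV : ¬ Module.Finite F V)
    (W : Submodule F (V × Module.Dual F V)) (hW : QGen W) :
    ∃ W' : Submodule F (V × Module.Dual F V),
      QGen W' ∧ W ⊓ W' = ⊥ ∧ W ⊔ W' = ⊤ :=
  stmt_15_general W hW
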